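/- Let n ≥ 2 be an integer. The identity p_n(x_1, …, x_n) + p_n(y_1, …, y_n) ≈ p_n(x_1, …, x_{n−1}, y_n) + p_n(y_1, …, y_{n−1}, x_n) is satisfied by the path graph semiring S_{p_n}, but fails in the graph semiring of the disjoint union of two paths with n vertices each (the {0, ω}-direct union S_{p_n} ∘ S_{p_n}). -/

import Mathlib

/-!
In the graph semiring every product, hence every value of a term `p_n`, lies in `{0, ω}`:
`p_n` evaluates to `ω` exactly when its arguments form a walk, and `+` on `{0, ω}` is
conjunction. So the identity says that `x` and `y` are both walks iff the two sequences obtained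
by exchanging their last vertices are. The path with `n` vertices has only one walk with `n`
vertices, so there the exchange changes nothing; in two disjoint copies of the path it joins a
walk in one copy to the last vertex of the other copy, which is no walk. -/

universe u

-- The underlying set of the graph semiring of a graph with vertex set `V`:
-- the vertices together with two extra elements `0` and `ω`.
inductive GS (V : Type u) : Type u where
  | zero : GS V
  | omega : GS V
  | vert : V → GS V

-- Multiplication of the graph semiring: `x·y = ω` if `x, y` are vertices joined by an
-- edge, and `x·y = 0` otherwise.
open Classical in
noncomputable def gsMul {V : Type u} (E : V → V → Prop) : GS V → GS V → GS V
  | GS.vert a, GS.vert b => if E a b then GS.omega else GS.zero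
  | _, _ => GS.zero

-- The flat addition of the graph semiring: `a + b = a` if `a = b`, else `0`.
open Classical in
noncomputable def gsAdd {V : Type u} (a b : GS V) : GS V :=
  if a = b then a else GS.zero

-- `gsSum f n = f 0 + f 1 + ⋯ + f n` (a sum of `n + 1` terms).
noncomputable def gsSum {V : Type u} (f : ℕ → GS V) : ℕ → GS V
  | 0 => f 0
  | n + 1 => gsAdd (gsSum f n) (f (n + 1))

-- `E` is a graph (in the sense of the paper): a directed graph with no isolated
-- vertices in which every vertex has out-degree at most 1 and in-degree at most 1.
def IsGraph {V : Type u} (E : V → V → Prop) : Prop :=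
  (∀ v : V, ∃ u : V, E v u ∨ E u v) ∧
  (∀ v a b : V, E v a → E v b → a = b) ∧
  (∀ v a b : V, E a v → E b v → a = b)

-- `v 0, v 1, …, v (m - 1)` is a path of the graph `E` with `m` vertices.
def IsPathOn {V : Type u} (E : V → V → Prop) (m : ℕ) (v : ℕ → V) : Prop :=
  (∀ i < m, ∀ j < m, v i = v j → i = j) ∧
  (∀ i : ℕ, i + 1 < m → E (v i) (v (i + 1)))

-- `v 0, v 1, …, v (m - 1)` is a cycle of the graph `E` of length `m`.
def IsCycleOn {V : Type u} (E : V → V → Prop) (m : ℕ) (v : ℕ → V) : Prop :=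
  1 ≤ m ∧
  (∀ i < m, ∀ j < m, v i = v j → i = j) ∧
  (∀ i : ℕ, i + 1 < m → E (v i) (v (i + 1))) ∧
  E (v (m - 1)) (v 0)

-- The value of the term `p_n(x_1, …, x_n) = x_1x_2 + x_2x_3 + ⋯ + x_{n-1}x_n` in the
-- graph semiring, under the assignment `x_{i+1} ↦ g i` (for `n ≥ 2`).
noncomputable def pTerm {V : Type u} (E : V → V → Prop) (g : ℕ → GS V) (n : ℕ) : GS V :=
  gsSum (fun i => gsMul E (g i) (g (i + 1))) (n - 2)

-- The graph semiring of `E` satisfies the identity `p_n ≈ c_n`, i.e. for all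
-- `x_1, …, x_n`: `x_1x_2 + ⋯ + x_{n-1}x_n = x_1x_2 + ⋯ + x_{n-1}x_n + x_nx_1`.
def satPC {V : Type u} (E : V → V → Prop) (n : ℕ) : Prop :=
  ∀ g : ℕ → GS V,
    pTerm E g n = gsAdd (pTerm E g n) (gsMul E (g (n - 1)) (g 0))

-- The edge relation of the path with vertices `a_1, …, a_n` (as `Fin n`).
def pathE (n : ℕ) : Fin n → Fin n → Prop := fun i j => (j : ℕ) = (i : ℕ) + 1

-- The edge relation of the disjoint union of two paths with `n` vertices each.
def pathE2 (n : ℕ) : Bool × Fin n → Bool × Fin n → Prop :=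
  fun p q => p.1 = q.1 ∧ (q.2 : ℕ) = (p.2 : ℕ) + 1

-- The graph semiring of `E` satisfies the identity
-- `p_n(x_1,…,x_n) + p_n(y_1,…,y_n) ≈ p_n(x_1,…,x_{n-1},y_n) + p_n(y_1,…,y_{n-1},x_n)`,
-- where `x_{i+1} ↦ g i` and `y_{i+1} ↦ h i`.
def satSwapId {V : Type u} (E : V → V → Prop) (n : ℕ) : Prop :=
  ∀ g h : ℕ → GS V,
    gsAdd (pTerm E g n) (pTerm E h n) =
      gsAdd (pTerm E (fun i => if i = n - 1 then h i else g i) n)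
            (pTerm E (fun i => if i = n - 1 then g i else h i) n)

namespace GS

variable {V : Type u}

open Classical in
noncomputable def ofProp (p : Prop) : GS V := if p then omega else zero

theorem ofProp_inj {p q : Prop} : (ofProp p : GS V) = ofProp q ↔ (p ↔ q) := by
  unfold ofProp
  by_cases p <;> by_cases q <;> simp_all

def Adj (E : V → V → Prop) (x y : GS V) : Prop :=
  ∃ a b, x = vert a ∧ y = vert b ∧ E a b

-- `g 0, …, g (n - 1)` is a walk of `E` with `n` vertices (for `n ≥ 2`; below that,
-- the truncated `n - 2` still asks for an edge `g 0 → g 1`).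
def IsWalk (E : V → V → Prop) (n : ℕ) (g : ℕ → GS V) : Prop :=
  ∀ i ≤ n - 2, Adj E (g i) (g (i + 1))

end GS

open GS

variable {V : Type u}

theorem gsMul_eq_ofProp (E : V → V → Prop) (x y : GS V) : gsMul E x y = ofProp (Adj E x y) := by
  unfold ofProp
  split_ifs with h
  · obtain ⟨a, b, rfl, rfl, hab⟩ := h
    simp [gsMul, hab]
  · cases x <;> cases y <;> simp only [gsMul, ite_eq_right_iff, reduceCtorEq, imp_false]
    exact fun hab => h ⟨_, _, rfl, rfl, hab⟩

theorem gsAdd_ofProp (p q : Prop) : gsAdd (ofProp p : GS V) (ofProp q) = ofProp (p ∧ q) := by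
  unfold gsAdd ofProp
  by_cases p <;> by_cases q <;> simp_all

theorem gsSum_ofProp (P : ℕ → Prop) (n : ℕ) :
    gsSum (fun i => (ofProp (P i) : GS V)) n = ofProp (∀ i ≤ n, P i) := by
  induction n with
  | zero => simp [gsSum]
  | succ n ih =>
    rw [gsSum, ih, gsAdd_ofProp, ofProp_inj]
    exact ⟨fun ⟨h, hn⟩ i hi => (Nat.le_succ_iff.1 hi).elim (h i) (· ▸ hn),
      fun h => ⟨fun i hi => h i (by omega), h _ le_rfl⟩⟩

theorem pTerm_eq_ofProp (E : V → V → Prop) (g : ℕ → GS V) (n : ℕ) :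
    pTerm E g n = ofProp (IsWalk E n g) := by
  simp only [pTerm, gsMul_eq_ofProp, gsSum_ofProp, IsWalk]

def replaceLast {α : Type*} (n : ℕ) (g h : ℕ → α) : ℕ → α :=
  fun i => if i = n - 1 then h i else g i

theorem satSwapId_iff_isWalk {E : V → V → Prop} {n : ℕ} :
    satSwapId E n ↔ ∀ g h : ℕ → GS V, (IsWalk E n g ∧ IsWalk E n h ↔
      IsWalk E n (replaceLast n g h) ∧ IsWalk E n (replaceLast n h g)) := by
  simp only [satSwapId, pTerm_eq_ofProp, gsAdd_ofProp, ofProp_inj]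
  rfl

theorem satSwapId_of_isWalk_iff {E : V → V → Prop} {n : ℕ} (c : ℕ → GS V)
    (hc : ∀ g, IsWalk E n g ↔ ∀ i < n, g i = c i) : satSwapId E n := by
  refine satSwapId_iff_isWalk.2 fun g h => ?_
  simp only [hc, replaceLast]
  grind

theorem not_satSwapId_of_isWalk {E : V → V → Prop} {n : ℕ} (hn : 2 ≤ n) {g h : ℕ → GS V}
    (hg : IsWalk E n g) (hh : IsWalk E n h) (hgh : ¬ Adj E (g (n - 2)) (h (n - 1))) :
    ¬ satSwapId E n := by
  intro hsat
  have hwalk := ((satSwapId_iff_isWalk.1 hsat g h).1 ⟨hg, hh⟩).1 (n - 2) le_rfl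
  have hlast : n - 2 + 1 = n - 1 := by omega
  simp only [replaceLast, hlast, if_pos, if_neg (show n - 2 ≠ n - 1 by omega)] at hwalk
  exact hgh hwalk

def pathVertex {n : ℕ} (hn : 0 < n) (i : ℕ) : Fin n := ⟨i % n, Nat.mod_lt i hn⟩

theorem pathE_pathVertex {n i : ℕ} (hn : 0 < n) (hi : i + 1 < n) :
    pathE n (pathVertex hn i) (pathVertex hn (i + 1)) := by
  simp only [pathE, pathVertex, Nat.mod_eq_of_lt hi, Nat.mod_eq_of_lt (Nat.lt_of_succ_lt hi)]

theorem val_eq_add_of_isWalk_pathE {n : ℕ} {g : ℕ → GS (Fin n)} (hg : IsWalk (pathE n) n g)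
    {a : Fin n} (h0 : g 0 = vert a) :
    ∀ i < n, ∃ b : Fin n, g i = vert b ∧ (b : ℕ) = a + i := by
  intro i hi
  induction i with
  | zero => exact ⟨a, h0, rfl⟩
  | succ i ih =>
    obtain ⟨b, hb, hba⟩ := ih (by omega)
    obtain ⟨b', c, hb', hc, hcb⟩ := hg i (by omega)
    obtain rfl : b = b' := vert.inj (hb.symm.trans hb')
    exact ⟨c, hc, by simp only [pathE] at hcb; omega⟩

theorem isWalk_pathE_iff {n : ℕ} (hn : 2 ≤ n) (g : ℕ → GS (Fin n)) :
    IsWalk (pathE n) n g ↔ ∀ i < n, g i = vert (pathVertex (by omega) i) := by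
  constructor
  · intro hg
    obtain ⟨a, -, h0, -⟩ := hg 0 (Nat.zero_le _)
    have ha : (a : ℕ) = 0 := by
      obtain ⟨b, -, hb⟩ := val_eq_add_of_isWalk_pathE hg h0 (n - 1) (by omega)
      omega
    intro i hi
    obtain ⟨b, hgb, hb⟩ := val_eq_add_of_isWalk_pathE hg h0 i hi
    rw [hgb]
    congr 1
    ext
    simp [pathVertex, Nat.mod_eq_of_lt hi, hb, ha]
  · intro hg i hi
    exact ⟨_, _, hg i (by omega), hg (i + 1) (by omega), pathE_pathVertex _ (by omega)⟩

theorem isWalk_pathE2 {n : ℕ} (hn : 2 ≤ n) (b : Bool) :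
    IsWalk (pathE2 n) n (fun i => vert (b, pathVertex (by omega) i)) :=
  fun i hi => ⟨_, _, rfl, rfl, rfl, pathE_pathVertex (by omega) (by omega)⟩

/-- For `n ≥ 2`, the identity
`p_n(x_1,…,x_n) + p_n(y_1,…,y_n) ≈ p_n(x_1,…,x_{n-1},y_n) + p_n(y_1,…,y_{n-1},x_n)`
holds in the path graph semiring `S_{p_n}` but fails in the graph semiring of the
disjoint union of two paths with `n` vertices each (`S_{p_n} ∘ S_{p_n}`). -/
theorem stmt_15 (n : ℕ) (hn : 2 ≤ n) :
    satSwapId (pathE n) n ∧ ¬ satSwapId (pathE2 n) n :=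
  ⟨satSwapId_of_isWalk_iff _ (isWalk_pathE_iff hn),
    not_satSwapId_of_isWalk hn (isWalk_pathE2 hn false) (isWalk_pathE2 hn true)
      fun ⟨_, _, ha, hb, hab, _⟩ => by cases ha; cases hb; cases hab⟩
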